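/- arXiv:2311.18718 — 6 statements merged into one kernel-verified Lean document; each statement's English description precedes it below -/
import Mathlib

section
/- Feature speed formula: under the general one-step gradient descent setup, if ∑_{ℓ=1}^{v} η_ℓ ‖∇_ℓ L(w)‖₂² = 0 then ḟ_v = 0. Otherwise, ⟨−b, ḟ_v⟩ > 0 (in particular b ≠ 0 and ḟ_v ≠ 0, so the non-oriented angle θ_v between ḟ_v and −b is well defined and lies in [0, π/2)), and ‖ḟ_v‖₂ = (∑_{ℓ=1}^{v} η_ℓ ‖∇_ℓ L(w)‖₂²) / (cos(θ_v) · ‖b‖₂), where cos(θ_v) := ⟨−b, ḟ_v⟩ / (‖b‖₂ ‖ḟ_v‖₂). -/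
open scoped RealInnerProductSpace

/-- **Feature speed formula.** Under the general one-step gradient
descent setup: if `∑_{ℓ≤v} η_ℓ‖∇_ℓL(w)‖² = 0` then `ḟ_v = 0`; otherwise
`⟨−b, ḟ_v⟩ > 0` (in particular `b ≠ 0`, `ḟ_v ≠ 0`, and the non-oriented angle
`θ_v` between `ḟ_v` and `−b` is well defined and lies in `[0, π/2)`), and
`‖ḟ_v‖ = (∑_{ℓ≤v} η_ℓ‖∇_ℓL(w)‖²)/(cos θ_v · ‖b‖)` where
`cos θ_v = ⟨−b, ḟ_v⟩/(‖b‖‖ḟ_v‖)`. -/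
theorem stmt1
    (v m : ℕ) (p : Fin v → ℕ)
    (F : (∀ ℓ : Fin v, EuclideanSpace ℝ (Fin (p ℓ))) → EuclideanSpace ℝ (Fin m))
    (G : EuclideanSpace ℝ (Fin m) → ℝ)
    (w : ∀ ℓ : Fin v, EuclideanSpace ℝ (Fin (p ℓ)))
    (η : Fin v → ℝ) (hη : ∀ ℓ, 0 ≤ η ℓ)
    (hF : DifferentiableAt ℝ F w)
    (hG : DifferentiableAt ℝ G (F w))
    (L : (∀ ℓ : Fin v, EuclideanSpace ℝ (Fin (p ℓ))) → ℝ)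
    (hL : L = fun w' => G (F w'))
    (b : EuclideanSpace ℝ (Fin m)) (hb : b = gradient G (F w))
    (g : ∀ ℓ : Fin v, EuclideanSpace ℝ (Fin (p ℓ)))
    (hg : ∀ ℓ, g ℓ = gradient (fun u => L (Function.update w ℓ u)) (w ℓ))
    (wdot : ∀ ℓ : Fin v, EuclideanSpace ℝ (Fin (p ℓ)))
    (hwdot : wdot = fun ℓ => (-η ℓ) • g ℓ)
    (fdot : EuclideanSpace ℝ (Fin m))
    (hfdot : fdot = fderiv ℝ F w wdot) :
    ((∑ ℓ, η ℓ * ‖g ℓ‖ ^ 2) = 0 → fdot = 0) ∧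
    ((∑ ℓ, η ℓ * ‖g ℓ‖ ^ 2) ≠ 0 →
      b ≠ 0 ∧ fdot ≠ 0 ∧
      0 < ⟪-b, fdot⟫ ∧
      (0 ≤ Real.arccos (⟪-b, fdot⟫ / (‖b‖ * ‖fdot‖)) ∧
        Real.arccos (⟪-b, fdot⟫ / (‖b‖ * ‖fdot‖)) < Real.pi / 2) ∧
      ‖fdot‖ = (∑ ℓ, η ℓ * ‖g ℓ‖ ^ 2) /
        ((⟪-b, fdot⟫ / (‖b‖ * ‖fdot‖)) * ‖b‖)) := by
  set S := ∑ ℓ, η ℓ * ‖g ℓ‖ ^ 2 with hS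
  have hterm : ∀ ℓ, 0 ≤ η ℓ * ‖g ℓ‖ ^ 2 := fun ℓ =>
    mul_nonneg (hη ℓ) (by positivity)
  have hLdiff : DifferentiableAt ℝ L w := by
    rw [hL]; exact hG.comp w hF
  -- inner product with gradient equals fderiv
  have hbinner : ∀ y, ⟪b, y⟫ = fderiv ℝ G (F w) y := by
    intro y
    rw [hb, gradient, InnerProductSpace.toDual_symm_apply]
  -- partial gradients
  have hginner : ∀ ℓ (u : EuclideanSpace ℝ (Fin (p ℓ))),
      ⟪g ℓ, u⟫ = fderiv ℝ L w (Pi.single ℓ u) := by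
    intro ℓ u
    rw [hg, gradient, InnerProductSpace.toDual_symm_apply]
    have hupd := hasFDerivAt_update (𝕜 := ℝ) w (w ℓ)
    have hLw : HasFDerivAt L (fderiv ℝ L w) (Function.update w ℓ (w ℓ)) := by
      rw [Function.update_eq_self]
      exact hLdiff.hasFDerivAt
    have hcomp := hLw.comp (w ℓ) hupd
    rw [show (fun u => L (Function.update w ℓ u)) = L ∘ Function.update w ℓ from rfl,
      hcomp.fderiv, ContinuousLinearMap.comp_apply]
    congr 1
    funext j
    by_cases hj : j = ℓ
    · subst hj; simp
    · simp [ContinuousLinearMap.pi_apply, Pi.single_apply, hj]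
  -- chain rule : ⟪b, fdot⟫ = fderiv L w wdot
  have hchain : ⟪b, fdot⟫ = fderiv ℝ L w wdot := by
    rw [hfdot, hbinner, hL]
    rw [show (fun w' => G (F w')) = G ∘ F from rfl, fderiv_comp w hG hF]
    rfl
  -- decompose wdot
  have hdecomp : fderiv ℝ L w wdot = ∑ ℓ, ⟪g ℓ, wdot ℓ⟫ := by
    have : wdot = ∑ ℓ, Pi.single ℓ (wdot ℓ) := by
      ext ℓ j
      rw [Finset.sum_apply]
      simp [Pi.single_apply]
    conv_lhs => rw [this]
    rw [map_sum]
    exact Finset.sum_congr rfl fun ℓ _ => (hginner ℓ (wdot ℓ)).symm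
  have hval : ⟪b, fdot⟫ = -S := by
    rw [hchain, hdecomp, hS]
    rw [← Finset.sum_neg_distrib]
    refine Finset.sum_congr rfl fun ℓ _ => ?_
    rw [hwdot]
    show @inner ℝ _ _ (g ℓ) ((-η ℓ) • g ℓ) = -(η ℓ * ‖g ℓ‖ ^ 2)
    rw [inner_smul_right, real_inner_self_eq_norm_sq]
    ring
  have hneg : ⟪-b, fdot⟫ = S := by rw [inner_neg_left, hval]; ring
  constructor
  · intro h0
    have hz : ∀ ℓ, η ℓ * ‖g ℓ‖ ^ 2 = 0 := by
      intro ℓ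
      have := (Finset.sum_eq_zero_iff_of_nonneg (fun ℓ _ => hterm ℓ)).mp h0
      exact this ℓ (Finset.mem_univ ℓ)
    have hwz : wdot = 0 := by
      funext ℓ
      rw [hwdot]
      rcases mul_eq_zero.mp (hz ℓ) with h | h
      · simp [h]
      · have : g ℓ = 0 := by
          have := pow_eq_zero_iff (n := 2) (by norm_num) |>.mp h
          exact norm_eq_zero.mp this
        simp [this]
    rw [hfdot, hwz, map_zero]
  · intro hne
    have hSpos : 0 < S := lt_of_le_of_ne (Finset.sum_nonneg fun ℓ _ => hterm ℓ) (Ne.symm hne)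
    have hip : 0 < ⟪-b, fdot⟫ := hneg ▸ hSpos
    have hbne : b ≠ 0 := by
      rintro rfl
      simp at hip
    have hfne : fdot ≠ 0 := by
      rintro rfl
      simp at hip
    have hbn : 0 < ‖b‖ := norm_pos_iff.mpr hbne
    have hfn : 0 < ‖fdot‖ := norm_pos_iff.mpr hfne
    have hcpos : 0 < ⟪-b, fdot⟫ / (‖b‖ * ‖fdot‖) := div_pos hip (by positivity)
    refine ⟨hbne, hfne, hip, ⟨Real.arccos_nonneg _, ?_⟩, ?_⟩
    · exact Real.arccos_lt_pi_div_two.mpr hcpos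
    · have h1 : ⟪-b, fdot⟫ / (‖b‖ * ‖fdot‖) * ‖b‖ = S / ‖fdot‖ := by
        rw [hneg]
        field_simp
      rw [h1, div_div_eq_mul_div, mul_div_cancel_left₀ _ hne]
end

section
/- Differentiated Euler identity along curves: let f : ℝ → ℝ^m and W : ℝ → ℝ^q be differentiable curves, let H : ℝ^m × ℝ^q → ℝ^k be twice continuously differentiable and positively 1-homogeneous in its first argument (H(c x, w) = c H(x, w) for all c > 0), and let loss : ℝ^k → ℝ be twice continuously differentiable. Define F(t) := H(f(t), W(t)), b_L(t) := ∇loss(F(t)), and b(t) := (∂₁H(f(t), W(t)))^⊤ b_L(t), where ∂₁H denotes the partial differential of H in its first argument. Then for every t, ⟨b'(t), f(t)⟩ + ⟨b(t), f'(t)⟩ = ⟨F(t), ∇²loss(F(t))[F'(t)]⟩ + ⟨b_L(t), F'(t)⟩, where ∇²loss(F(t)) is the Hessian of loss at F(t). -/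
open scoped RealInnerProductSpace

section Aux

variable {m q k : ℕ}

local notation "Em" => EuclideanSpace ℝ (Fin m)
local notation "Eq'" => EuclideanSpace ℝ (Fin q)
local notation "Ek" => EuclideanSpace ℝ (Fin k)

/-- Partial derivative in the first argument as composition with `inl`. -/
lemma aux_hasFDerivAt_partial (H : Em × Eq' → Ek) (hH : Differentiable ℝ H)
    (x : Em) (w : Eq') :
    HasFDerivAt (fun y => H (y, w))
      ((fderiv ℝ H (x, w)).comp (ContinuousLinearMap.inl ℝ Em Eq')) x :=
  (hH (x, w)).hasFDerivAt.comp x (hasFDerivAt_prodMk_left x w)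

/-- Euler's identity from positive 1-homogeneity. -/
lemma aux_euler (H : Em × Eq' → Ek) (hH : Differentiable ℝ H)
    (hhom : ∀ c : ℝ, 0 < c → ∀ x u, H (c • x, u) = c • H (x, u))
    (x : Em) (w : Eq') :
    ((fderiv ℝ H (x, w)).comp (ContinuousLinearMap.inl ℝ Em Eq')) x = H (x, w) := by
  set L := (fderiv ℝ H (x, w)).comp (ContinuousLinearMap.inl ℝ Em Eq') with hL
  have hsmul : HasDerivAt (fun c : ℝ => c • x) x 1 := by
    simpa using (hasDerivAt_id (1 : ℝ)).smul_const x
  have h1 : HasDerivAt (fun c : ℝ => H (c • x, w)) (L x) 1 := by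
    have := (aux_hasFDerivAt_partial H hH ((1 : ℝ) • x) w).comp_hasDerivAt 1 hsmul
    simp only [one_smul] at this
    exact this
  have h2 : HasDerivAt (fun c : ℝ => H (c • x, w)) (H (x, w)) 1 := by
    have heq : (fun c : ℝ => c • H (x, w)) =ᶠ[nhds (1 : ℝ)] fun c : ℝ => H (c • x, w) := by
      filter_upwards [Ioi_mem_nhds (show (0:ℝ) < 1 by norm_num)] with c hc
      exact (hhom c hc x w).symm
    have : HasDerivAt (fun c : ℝ => c • H (x, w)) (H (x, w)) 1 := by
      simpa using (hasDerivAt_id (1 : ℝ)).smul_const (H (x, w))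
    exact this.congr_of_eventuallyEq heq.symm
  exact h1.unique h2

/-- The adjoint map is a bounded linear map over ℝ. -/
lemma aux_adjoint_bounded :
    IsBoundedLinearMap ℝ (fun B : Em →L[ℝ] Ek => ContinuousLinearMap.adjoint B) := by
  refine ⟨⟨fun B C => map_add _ B C, fun c B => ?_⟩, 1, one_pos, fun B => ?_⟩
  · simp
  · simp

end Aux

/-- **Differentiated Euler identity along curves.** For
differentiable curves `f, W`, a `C²` map `H` positively 1-homogeneous in its
first argument, and a `C²` loss, with `F(t) = H(f(t), W(t))`,
`b_L(t) = ∇loss(F(t))` and `b(t) = (∂₁H(f(t),W(t)))ᵀ b_L(t)`, one has for all `t`: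
`⟨b'(t), f(t)⟩ + ⟨b(t), f'(t)⟩ = ⟨F(t), ∇²loss(F(t))[F'(t)]⟩ + ⟨b_L(t), F'(t)⟩`,
where the Hessian is realized as the derivative of the gradient of `loss`. -/
theorem stmt8
    (m q k : ℕ)
    (f : ℝ → EuclideanSpace ℝ (Fin m)) (W : ℝ → EuclideanSpace ℝ (Fin q))
    (hf : Differentiable ℝ f) (hW : Differentiable ℝ W)
    (H : EuclideanSpace ℝ (Fin m) × EuclideanSpace ℝ (Fin q) → EuclideanSpace ℝ (Fin k))
    (hH : ContDiff ℝ 2 H)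
    (hhom : ∀ c : ℝ, 0 < c → ∀ x u, H (c • x, u) = c • H (x, u))
    (loss : EuclideanSpace ℝ (Fin k) → ℝ) (hloss : ContDiff ℝ 2 loss)
    (F : ℝ → EuclideanSpace ℝ (Fin k)) (hF : F = fun t => H (f t, W t))
    (bL : ℝ → EuclideanSpace ℝ (Fin k)) (hbL : bL = fun t => gradient loss (F t))
    (b : ℝ → EuclideanSpace ℝ (Fin m))
    (hb : b = fun t =>
      ContinuousLinearMap.adjoint (fderiv ℝ (fun x => H (x, W t)) (f t)) (bL t)) :
    ∀ t : ℝ,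
      ⟪deriv b t, f t⟫ + ⟪b t, deriv f t⟫ =
        ⟪F t, fderiv ℝ (gradient loss) (F t) (deriv F t)⟫ + ⟪bL t, deriv F t⟫ := by
  intro t
  have hH1 : Differentiable ℝ H := hH.differentiable (by norm_num)
  -- gradient of loss is C¹
  have hgC : ContDiff ℝ 1 (gradient loss) := by
    have h1 : ContDiff ℝ 1 (fderiv ℝ loss) := hloss.fderiv_right (by norm_num)
    exact ((InnerProductSpace.toDual ℝ
      (EuclideanSpace ℝ (Fin k))).symm.contDiff).comp h1
  -- F, bL differentiable
  have hFd : Differentiable ℝ F := by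
    rw [hF]; exact hH1.comp (hf.prodMk hW)
  have hbLd : Differentiable ℝ bL := by
    rw [hbL]; exact (hgC.differentiable one_ne_zero).comp hFd
  -- the family of partial differentials
  set A : ℝ → (EuclideanSpace ℝ (Fin m) →L[ℝ] EuclideanSpace ℝ (Fin k)) :=
    fun s => (fderiv ℝ H (f s, W s)).comp
      (ContinuousLinearMap.inl ℝ (EuclideanSpace ℝ (Fin m)) (EuclideanSpace ℝ (Fin q)))
    with hA
  have hpart : ∀ s : ℝ, fderiv ℝ (fun x => H (x, W s)) (f s) = A s := fun s =>
    (aux_hasFDerivAt_partial H hH1 (f s) (W s)).fderiv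
  have hb' : b = fun s => ContinuousLinearMap.adjoint (A s) (bL s) := by
    rw [hb]; funext s; rw [hpart s]
  -- A is differentiable
  have hAd : Differentiable ℝ A := by
    have h1 : ContDiff ℝ 1 (fderiv ℝ H) := hH.fderiv_right (by norm_num)
    have h2 : Differentiable ℝ (fun s => fderiv ℝ H (f s, W s)) :=
      (h1.differentiable one_ne_zero).comp (hf.prodMk hW)
    have h3 := ((ContinuousLinearMap.compL ℝ (EuclideanSpace ℝ (Fin m))
      (EuclideanSpace ℝ (Fin m) × EuclideanSpace ℝ (Fin q))
      (EuclideanSpace ℝ (Fin k))).flip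
      (ContinuousLinearMap.inl ℝ (EuclideanSpace ℝ (Fin m))
        (EuclideanSpace ℝ (Fin q)))).differentiable.comp h2
    exact h3
  -- b is differentiable
  have hbd : Differentiable ℝ b := by
    rw [hb']
    exact (aux_adjoint_bounded.differentiable.comp hAd).clm_apply hbLd
  -- pointwise Euler identity
  have key : ∀ s : ℝ, ⟪b s, f s⟫ = ⟪bL s, F s⟫ := by
    intro s
    rw [hb']
    rw [ContinuousLinearMap.adjoint_inner_left]
    rw [hA]
    rw [aux_euler H hH1 hhom (f s) (W s), hF]
  -- derivative of the LHS
  have hLHS : HasDerivAt (fun s => ⟪b s, f s⟫)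
      (⟪b t, deriv f t⟫ + ⟪deriv b t, f t⟫) t :=
    HasDerivAt.inner ℝ (hbd t).hasDerivAt (hf t).hasDerivAt
  -- derivative of the RHS
  have hRHS : HasDerivAt (fun s => ⟪bL s, F s⟫)
      (⟪bL t, deriv F t⟫ + ⟪deriv bL t, F t⟫) t :=
    HasDerivAt.inner ℝ (hbLd t).hasDerivAt (hFd t).hasDerivAt
  have hLHS' : HasDerivAt (fun s => ⟪bL s, F s⟫)
      (⟪b t, deriv f t⟫ + ⟪deriv b t, f t⟫) t :=
    hLHS.congr_of_eventuallyEq (Filter.Eventually.of_forall fun s => (key s).symm)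
  have heq : ⟪b t, deriv f t⟫ + ⟪deriv b t, f t⟫
      = ⟪bL t, deriv F t⟫ + ⟪deriv bL t, F t⟫ := hLHS'.unique hRHS
  -- chain rule for bL
  have hbLderiv : deriv bL t = fderiv ℝ (gradient loss) (F t) (deriv F t) := by
    have : HasDerivAt bL (fderiv ℝ (gradient loss) (F t) (deriv F t)) t := by
      rw [hbL]
      exact ((hgC.differentiable one_ne_zero) (F t)).hasFDerivAt.comp_hasDerivAt t
        (hFd t).hasDerivAt
    exact this.deriv
  rw [hbLderiv] at heq
  linarith [heq, real_inner_comm (F t) ((fderiv ℝ (gradient loss) (F t)) (deriv F t))]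
end

section
/- Backward speed formula: consider a network with parameter blocks w_1 ∈ ℝ^{p_1}, …, w_L ∈ ℝ^{p_L}, a twice continuously differentiable map F : ℝ^{p_1} × ⋯ × ℝ^{p_v} → ℝ^m (sending the first v blocks to the feature f_v), a twice continuously differentiable map H : ℝ^m × (ℝ^{p_{v+1}} × ⋯ × ℝ^{p_L}) → ℝ^k that is positively 1-homogeneous in its first argument (sending the feature and the later parameters to the output f_L), and a twice continuously differentiable loss : ℝ^k → ℝ. Define L(w) := loss(H(F(w_1,…,w_v), w_{v+1},…,w_L)). Given learning rates η_1,…,η_L ≥ 0, consider the gradient flow curves w_ℓ(t) := w_ℓ − t η_ℓ ∇_ℓ L(w), and define f_v(t) := F(w_1(t),…,w_v(t)), f_L(t) := H(f_v(t), w_{v+1}(t),…,w_L(t)), b_L(t) := ∇loss(f_L(t)), and b_v(t) := (∂₁H(f_v(t), w_{v+1}(t),…,w_L(t)))^⊤ b_L(t). Then, with all time derivatives taken at t = 0: −⟨ḃ_v, f_v⟩ = −⟨f_L, ∇²loss(f_L)[ḟ_L]⟩ + ∑_{ℓ=v+1}^{L} η_ℓ ‖∇_ℓ L(w)‖₂².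 Moreover, if the right-hand side Q is nonzero, then ḃ_v ≠ 0, f_v ≠ 0, and ‖ḃ_v‖₂ = Q / (‖f_v‖₂ · cos(θ̃_v)), where cos(θ̃_v) := ⟨f_v, −ḃ_v⟩ / (‖f_v‖₂ ‖ḃ_v‖₂). -/
open scoped RealInnerProductSpace

lemma euler_hom {E G : Type*} [NormedAddCommGroup E] [NormedSpace ℝ E]
    [NormedAddCommGroup G] [NormedSpace ℝ G]
    (f : E → G) (x : E) (hf : DifferentiableAt ℝ f x)
    (h : ∀ c : ℝ, 0 < c → f (c • x) = c • f x) :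
    fderiv ℝ f x x = f x := by
  have hc : HasDerivAt (fun t : ℝ => (1 + t) • x) x 0 := by
    simpa using ((hasDerivAt_id (0:ℝ)).const_add 1).smul_const x
  have h1 : HasDerivAt (fun t : ℝ => f ((1 + t) • x)) (fderiv ℝ f x x) 0 := by
    have hx : (1 + (0:ℝ)) • x = x := by simp
    have := (hx ▸ hf.hasFDerivAt).comp_hasDerivAt 0 hc
    simpa [Function.comp_def] using this
  have h2 : HasDerivAt (fun t : ℝ => f ((1 + t) • x)) (f x) 0 := by
    have hbase : HasDerivAt (fun t : ℝ => (1 + t) • f x) (f x) 0 := by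
      simpa using ((hasDerivAt_id (0:ℝ)).const_add 1).smul_const (f x)
    refine hbase.congr_of_eventuallyEq ?_
    have : ∀ᶠ t in nhds (0:ℝ), (-1:ℝ) < t := eventually_gt_nhds (by norm_num)
    filter_upwards [this] with t ht
    rw [h (1 + t) (by linarith)]
  exact h1.unique h2

lemma fderiv_pi_block {ι : Type*} [Fintype ι] [DecidableEq ι] {E : ι → Type*}
    [∀ i, NormedAddCommGroup (E i)] [∀ i, NormedSpace ℝ (E i)]
    {G : Type*} [NormedAddCommGroup G] [NormedSpace ℝ G]
    (f : (∀ i, E i) → G) (x : ∀ i, E i) (hf : DifferentiableAt ℝ f x) (y : ∀ i, E i) :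
    fderiv ℝ f x y = ∑ i, fderiv ℝ (fun z => f (Function.update x i z)) (x i) (y i) := by
  have key : ∀ i, fderiv ℝ (fun z => f (Function.update x i z)) (x i) (y i)
      = fderiv ℝ f x (Pi.single i (y i)) := by
    intro i
    have h1 := hasFDerivAt_update (𝕜 := ℝ) x (x i)
    have h2 : Function.update x i (x i) = x := Function.update_eq_self i x
    have h3 : HasFDerivAt (fun z => f (Function.update x i z))
        ((fderiv ℝ f x).comp (ContinuousLinearMap.pi (Pi.single i (ContinuousLinearMap.id ℝ (E i)))))
        (x i) := by
      have hf' : HasFDerivAt f (fderiv ℝ f x) (Function.update x i (x i)) := by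
        rw [h2]; exact hf.hasFDerivAt
      exact hf'.comp (x i) h1
    rw [h3.fderiv]
    simp only [ContinuousLinearMap.comp_apply]
    congr 1
    ext j
    by_cases hj : j = i
    · subst hj; simp
    · simp [Pi.single_apply, hj]
  calc fderiv ℝ f x y = fderiv ℝ f x (∑ i, Pi.single i (y i)) := by
        rw [Finset.univ_sum_single]
    _ = ∑ i, fderiv ℝ f x (Pi.single i (y i)) := map_sum _ _ _
    _ = ∑ i, fderiv ℝ (fun z => f (Function.update x i z)) (x i) (y i) := by
        exact Finset.sum_congr rfl fun i _ => (key i).symm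

lemma toDual_symm_differentiable {E : Type*} [NormedAddCommGroup E] [InnerProductSpace ℝ E]
    [CompleteSpace E] :
    Differentiable ℝ (fun L : StrongDual ℝ E => (InnerProductSpace.toDual ℝ E).symm L) := by
  have h : IsBoundedLinearMap ℝ
      (fun L : StrongDual ℝ E => (InnerProductSpace.toDual ℝ E).symm L) :=
    { map_add := fun T S => map_add _ _ _
      map_smul := fun c T => by
        have := (InnerProductSpace.toDual ℝ E).symm.map_smulₛₗ c T
        simpa using this
      bound := ⟨1, one_pos, fun T => by
        rw [one_mul]
        exact le_of_eq ((InnerProductSpace.toDual ℝ E).symm.norm_map T)⟩ }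
  exact h.differentiable

lemma adjoint_differentiable {E F : Type*} [NormedAddCommGroup E] [InnerProductSpace ℝ E]
    [NormedAddCommGroup F] [InnerProductSpace ℝ F] [CompleteSpace E] [CompleteSpace F] :
    Differentiable ℝ (fun T : E →L[ℝ] F => ContinuousLinearMap.adjoint T) := by
  have h : IsBoundedLinearMap ℝ (fun T : E →L[ℝ] F => ContinuousLinearMap.adjoint T) :=
    { map_add := fun T S => map_add _ _ _
      map_smul := fun c T => by
        have := ContinuousLinearMap.adjoint.map_smulₛₗ c T
        simpa using this
      bound := ⟨1, one_pos, fun T => by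
        rw [one_mul]
        exact le_of_eq (ContinuousLinearMap.adjoint.norm_map T)⟩ }
  exact h.differentiable

/-- **Backward speed formula.** For a network
`L(w,u) = loss(H(F(w), u))` with `H` positively 1-homogeneous in its feature
argument, along the gradient-descent curves `w_ℓ(t) = w_ℓ − tη_ℓ∇_ℓL` and
`u_j(t) = u_j − tκ_j∇_jL`, with `f_v(t) = F(w(t))`, `f_L(t) = H(f_v(t), u(t))`,
`b_L(t) = ∇loss(f_L(t))` and `b_v(t) = (∂₁H)ᵀ b_L(t)`, one has at `t = 0`:
`−⟨ḃ_v, f_v⟩ = −⟨f_L, ∇²loss(f_L)[ḟ_L]⟩ + ∑_{ℓ>v} η_ℓ‖∇_ℓL‖²  (=: Q)`,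
and if `Q ≠ 0` then `ḃ_v ≠ 0`, `f_v ≠ 0` and
`‖ḃ_v‖ = Q/(‖f_v‖·cos θ̃_v)` with `cos θ̃_v = ⟨f_v, −ḃ_v⟩/(‖f_v‖‖ḃ_v‖)`. -/
theorem stmt9
    (v r m k : ℕ) (p : Fin v → ℕ) (q : Fin r → ℕ)
    (F : (∀ ℓ : Fin v, EuclideanSpace ℝ (Fin (p ℓ))) → EuclideanSpace ℝ (Fin m))
    (hF : ContDiff ℝ 2 F)
    (H : EuclideanSpace ℝ (Fin m) × (∀ j : Fin r, EuclideanSpace ℝ (Fin (q j))) →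
      EuclideanSpace ℝ (Fin k))
    (hH : ContDiff ℝ 2 H)
    (hhom : ∀ c : ℝ, 0 < c → ∀ x u, H (c • x, u) = c • H (x, u))
    (loss : EuclideanSpace ℝ (Fin k) → ℝ) (hloss : ContDiff ℝ 2 loss)
    (w : ∀ ℓ : Fin v, EuclideanSpace ℝ (Fin (p ℓ)))
    (u : ∀ j : Fin r, EuclideanSpace ℝ (Fin (q j)))
    (η : Fin v → ℝ) (hη : ∀ ℓ, 0 ≤ η ℓ)
    (κ : Fin r → ℝ) (hκ : ∀ j, 0 ≤ κ j)
    (Lfun : (∀ ℓ : Fin v, EuclideanSpace ℝ (Fin (p ℓ))) →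
      (∀ j : Fin r, EuclideanSpace ℝ (Fin (q j))) → ℝ)
    (hLfun : Lfun = fun w' u' => loss (H (F w', u')))
    -- block gradients of `L` at `(w, u)`
    (g1 : ∀ ℓ : Fin v, EuclideanSpace ℝ (Fin (p ℓ)))
    (hg1 : ∀ ℓ, g1 ℓ = gradient (fun z => Lfun (Function.update w ℓ z) u) (w ℓ))
    (g2 : ∀ j : Fin r, EuclideanSpace ℝ (Fin (q j)))
    (hg2 : ∀ j, g2 j = gradient (fun z => Lfun w (Function.update u j z)) (u j))
    -- gradient-descent curves
    (wt : ℝ → ∀ ℓ : Fin v, EuclideanSpace ℝ (Fin (p ℓ)))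
    (hwt : wt = fun t ℓ => w ℓ - (t * η ℓ) • g1 ℓ)
    (ut : ℝ → ∀ j : Fin r, EuclideanSpace ℝ (Fin (q j)))
    (hut : ut = fun t j => u j - (t * κ j) • g2 j)
    (fv : ℝ → EuclideanSpace ℝ (Fin m)) (hfv : fv = fun t => F (wt t))
    (fL : ℝ → EuclideanSpace ℝ (Fin k)) (hfL : fL = fun t => H (fv t, ut t))
    (bL : ℝ → EuclideanSpace ℝ (Fin k)) (hbL : bL = fun t => gradient loss (fL t))
    (bv : ℝ → EuclideanSpace ℝ (Fin m))
    (hbv : bv = fun t =>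
      ContinuousLinearMap.adjoint (fderiv ℝ (fun x => H (x, ut t)) (fv t)) (bL t))
    (Q : ℝ)
    (hQ : Q = -⟪fL 0, fderiv ℝ (gradient loss) (fL 0) (deriv fL 0)⟫ +
      ∑ j, κ j * ‖g2 j‖ ^ 2) :
    -⟪deriv bv 0, fv 0⟫ = Q ∧
    (Q ≠ 0 →
      deriv bv 0 ≠ 0 ∧ fv 0 ≠ 0 ∧
      ‖deriv bv 0‖ =
        Q / (‖fv 0‖ * (⟪fv 0, -deriv bv 0⟫ / (‖fv 0‖ * ‖deriv bv 0‖)))) := by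
  classical
  -- basic differentiability facts
  have hFd : Differentiable ℝ F := hF.differentiable two_ne_zero
  have hHd : Differentiable ℝ H := hH.differentiable two_ne_zero
  have hlossd : Differentiable ℝ loss := hloss.differentiable two_ne_zero
  have hgradC : Differentiable ℝ (gradient loss) := by
    have heq : gradient loss =
        fun y => (InnerProductSpace.toDual ℝ (EuclideanSpace ℝ (Fin k))).symm
          (fderiv ℝ loss y) := rfl
    rw [heq]
    exact toDual_symm_differentiable.comp ((hloss.fderiv_right le_rfl).differentiable one_ne_zero)
  have hHfderivC : ContDiff ℝ 1 (fderiv ℝ H) := hH.fderiv_right le_rfl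
  -- values at 0
  have hw0 : wt 0 = w := by rw [hwt]; funext ℓ; simp
  have hu0 : ut 0 = u := by rw [hut]; funext j; simp
  have hfv0 : fv 0 = F w := by simp only [hfv, hw0]
  have hfL0 : fL 0 = H (F w, u) := by simp only [hfL, hfv0, hu0]
  -- velocities
  set wd : ∀ ℓ : Fin v, EuclideanSpace ℝ (Fin (p ℓ)) := fun ℓ => (-(η ℓ)) • g1 ℓ with hwd
  set ud : ∀ j : Fin r, EuclideanSpace ℝ (Fin (q j)) := fun j => (-(κ j)) • g2 j with hud
  have hwt' : HasDerivAt wt wd 0 := by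
    rw [hwt]
    refine hasDerivAt_pi.2 fun ℓ => ?_
    have h1 : HasDerivAt (fun t : ℝ => (t * η ℓ) • g1 ℓ) ((η ℓ) • g1 ℓ) 0 := by
      simpa using (hasDerivAt_mul_const (η ℓ)).smul_const (g1 ℓ)
    simpa [hwd, neg_smul] using h1.const_sub (w ℓ)
  have hut' : HasDerivAt ut ud 0 := by
    rw [hut]
    refine hasDerivAt_pi.2 fun j => ?_
    have h1 : HasDerivAt (fun t : ℝ => (t * κ j) • g2 j) ((κ j) • g2 j) 0 := by
      simpa using (hasDerivAt_mul_const (κ j)).smul_const (g2 j)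
    simpa [hud, neg_smul] using h1.const_sub (u j)
  -- derivative of fv
  set fvd : EuclideanSpace ℝ (Fin m) := fderiv ℝ F w wd with hfvd
  have hfv' : HasDerivAt fv fvd 0 := by
    rw [hfv]
    have hFD : HasFDerivAt F (fderiv ℝ F w) (wt 0) := by
      rw [hw0]; exact (hFd w).hasFDerivAt
    exact hFD.comp_hasDerivAt 0 hwt'
  have hprod : HasDerivAt (fun t => (fv t, ut t)) (fvd, ud) 0 := hfv'.prodMk hut'
  -- derivative of fL
  set fLd : EuclideanSpace ℝ (Fin k) := fderiv ℝ H (fv 0, u) (fvd, ud) with hfLd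
  have hfL' : HasDerivAt fL fLd 0 := by
    rw [hfL]
    have hHD : HasFDerivAt H (fderiv ℝ H (fv 0, u)) (fv 0, ut 0) := by
      rw [hu0]; exact (hHd _).hasFDerivAt
    exact hHD.comp_hasDerivAt 0 hprod
  have hderiv_fL : deriv fL 0 = fLd := hfL'.deriv
  -- derivative of bL
  set bLd : EuclideanSpace ℝ (Fin k) := fderiv ℝ (gradient loss) (fL 0) fLd with hbLd
  have hbL' : HasDerivAt bL bLd 0 := by
    rw [hbL]
    exact (hgradC (fL 0)).hasFDerivAt.comp_hasDerivAt 0 hfL'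
  -- the partial-derivative-in-x operator, as composition with inl
  set A : ℝ → (EuclideanSpace ℝ (Fin m) →L[ℝ] EuclideanSpace ℝ (Fin k)) :=
    fun t => (fderiv ℝ H (fv t, ut t)).comp
      (ContinuousLinearMap.inl ℝ (EuclideanSpace ℝ (Fin m))
        (∀ j : Fin r, EuclideanSpace ℝ (Fin (q j)))) with hA
  have hAeq : ∀ t, fderiv ℝ (fun x => H (x, ut t)) (fv t) = A t := by
    intro t
    have h1 : HasFDerivAt (fun x : EuclideanSpace ℝ (Fin m) => (x, ut t))
        (ContinuousLinearMap.inl ℝ (EuclideanSpace ℝ (Fin m))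
          (∀ j : Fin r, EuclideanSpace ℝ (Fin (q j)))) (fv t) :=
      hasFDerivAt_prodMk_left _ _
    exact ((hHd _).hasFDerivAt.comp (fv t) h1).fderiv
  have hAdiff : DifferentiableAt ℝ A 0 := by
    refine DifferentiableAt.clm_comp ?_ (differentiableAt_const _)
    exact ((hHfderivC.differentiable one_ne_zero) _).comp 0 hprod.differentiableAt
  -- bv is differentiable at 0
  have hbveq : bv = fun t => ContinuousLinearMap.adjoint (A t) (bL t) := by
    rw [hbv]; funext t; rw [hAeq]
  have hbvdiff : DifferentiableAt ℝ bv 0 := by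
    rw [hbveq]
    exact ((adjoint_differentiable (A 0)).comp 0 hAdiff).clm_apply hbL'.differentiableAt
  set bvd : EuclideanSpace ℝ (Fin m) := deriv bv 0 with hbvd
  have hbv' : HasDerivAt bv bvd 0 := hbvdiff.hasDerivAt
  -- Euler identity: ⟪bv t, fv t⟫ = ⟪bL t, fL t⟫ for all t
  have hkey : ∀ t, ⟪bv t, fv t⟫ = ⟪bL t, fL t⟫ := by
    intro t
    have hdiff : DifferentiableAt ℝ (fun x => H (x, ut t)) (fv t) :=
      (hHd _).comp (fv t) (differentiableAt_fun_id.prodMk (differentiableAt_const _))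
    have heuler : fderiv ℝ (fun x => H (x, ut t)) (fv t) (fv t) = H (fv t, ut t) :=
      euler_hom _ _ hdiff (fun c hc => hhom c hc (fv t) (ut t))
    rw [hbv]
    rw [ContinuousLinearMap.adjoint_inner_left, heuler, hfL]
  -- differentiate both sides at 0
  have hφ : HasDerivAt (fun t => ⟪bv t, fv t⟫) (⟪bv 0, fvd⟫ + ⟪bvd, fv 0⟫) 0 :=
    hbv'.inner ℝ hfv'
  have hψ : HasDerivAt (fun t => ⟪bv t, fv t⟫) (⟪bL 0, fLd⟫ + ⟪bLd, fL 0⟫) 0 := by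
    have := hbL'.inner ℝ hfL'
    refine this.congr_of_eventuallyEq ?_
    filter_upwards with t using hkey t
  have hmain : ⟪bv 0, fvd⟫ + ⟪bvd, fv 0⟫ = ⟪bL 0, fLd⟫ + ⟪bLd, fL 0⟫ := hφ.unique hψ
  -- ⟪bv 0, fvd⟫ in terms of bL
  have hbv0 : bv 0 = ContinuousLinearMap.adjoint (A 0) (bL 0) := by rw [hbveq]
  have hA0 : A 0 = (fderiv ℝ H (fv 0, u)).comp
      (ContinuousLinearMap.inl ℝ (EuclideanSpace ℝ (Fin m))
        (∀ j : Fin r, EuclideanSpace ℝ (Fin (q j)))) := by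
    rw [hA]; simp only [hu0]
  have hbvfv : ⟪bv 0, fvd⟫ = ⟪bL 0, fderiv ℝ H (fv 0, u) (fvd, 0)⟫ := by
    rw [hbv0, ContinuousLinearMap.adjoint_inner_left, hA0]
    simp [ContinuousLinearMap.comp_apply]
  -- difference term
  have hdiffterm : ⟪bL 0, fLd⟫ - ⟪bv 0, fvd⟫ = ⟪bL 0, fderiv ℝ H (fv 0, u) (0, ud)⟫ := by
    rw [hbvfv, hfLd]
    rw [← inner_sub_right, ← map_sub]
    congr 2
    simp [Prod.ext_iff]
  -- compute the u-direction term via block gradients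
  have hGu_diff : DifferentiableAt ℝ (fun u' => Lfun w u') u := by
    rw [hLfun]
    exact (hlossd _).comp u ((hHd _).comp u
      ((differentiableAt_const _).prodMk differentiableAt_fun_id))
  have hinner_grad : ∀ (E : Type) [NormedAddCommGroup E], True := fun _ _ => trivial
  have huterm : ⟪bL 0, fderiv ℝ H (fv 0, u) (0, ud)⟫ = - ∑ j, κ j * ‖g2 j‖ ^ 2 := by
    rw [hfv0]
    have h1 : HasFDerivAt (fun u' : ∀ j : Fin r, EuclideanSpace ℝ (Fin (q j)) => (F w, u'))
        (ContinuousLinearMap.inr ℝ (EuclideanSpace ℝ (Fin m))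
          (∀ j : Fin r, EuclideanSpace ℝ (Fin (q j)))) u :=
      hasFDerivAt_prodMk_right _ _
    have h2 : HasFDerivAt (fun u' => H (F w, u'))
        ((fderiv ℝ H (F w, u)).comp (ContinuousLinearMap.inr ℝ _ _)) u :=
      ((hHd (F w, u)).hasFDerivAt).comp u h1
    have h3 : HasFDerivAt (fun u' => Lfun w u')
        ((fderiv ℝ loss (H (F w, u))).comp
          ((fderiv ℝ H (F w, u)).comp (ContinuousLinearMap.inr ℝ _ _))) u := by
      rw [hLfun]
      exact ((hlossd _).hasFDerivAt).comp u h2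
    have h4 : fderiv ℝ (fun u' => Lfun w u') u ud
        = fderiv ℝ loss (H (F w, u)) (fderiv ℝ H (F w, u) (0, ud)) := by
      rw [h3.fderiv]; simp [ContinuousLinearMap.comp_apply]
    have h5 : fderiv ℝ loss (H (F w, u)) (fderiv ℝ H (F w, u) (0, ud))
        = ⟪bL 0, fderiv ℝ H (F w, u) (0, ud)⟫ := by
      rw [hbL]
      simp only [hfL0]
      exact (InnerProductSpace.toDual_symm_apply).symm
    -- step 2: block decomposition
    have h6 : fderiv ℝ (fun u' => Lfun w u') u ud
        = ∑ j, fderiv ℝ (fun z => Lfun w (Function.update u j z)) (u j) (ud j) :=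
      fderiv_pi_block _ u hGu_diff ud
    have h7 : ∀ j, fderiv ℝ (fun z => Lfun w (Function.update u j z)) (u j) (ud j)
        = ⟪g2 j, ud j⟫ := by
      intro j
      rw [hg2 j]
      exact (InnerProductSpace.toDual_symm_apply).symm
    have h8 : ∀ j, ⟪g2 j, ud j⟫ = -(κ j * ‖g2 j‖ ^ 2) := by
      intro j
      rw [hud]
      simp only [real_inner_smul_right, real_inner_self_eq_norm_sq]
      ring
    rw [← h5, ← h4, h6]
    simp_rw [fun j => (h7 j).trans (h8 j)]
    rw [Finset.sum_neg_distrib]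
  -- assemble part 1
  have part1 : -⟪bvd, fv 0⟫ = Q := by
    have e1 : ⟪bvd, fv 0⟫ = ⟪bLd, fL 0⟫ + (⟪bL 0, fLd⟫ - ⟪bv 0, fvd⟫) := by linarith [hmain]
    rw [e1, hdiffterm, huterm, hQ, hderiv_fL]
    rw [real_inner_comm (fL 0) (fderiv ℝ (gradient loss) (fL 0) fLd)]
    ring
  refine ⟨part1, fun hQne => ?_⟩
  have hb : bvd ≠ 0 := by
    intro h
    rw [h] at part1
    simp at part1
    exact hQne part1.symm
  have hfvne : fv 0 ≠ 0 := by
    intro h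
    rw [h] at part1
    simp at part1
    exact hQne part1.symm
  refine ⟨hb, hfvne, ?_⟩
  have h1 : ⟪fv 0, -bvd⟫ = Q := by
    rw [inner_neg_right, real_inner_comm]; exact part1
  rw [h1]
  have hbn : ‖bvd‖ ≠ 0 := norm_ne_zero_iff.2 hb
  have hfn : ‖fv 0‖ ≠ 0 := norm_ne_zero_iff.2 hfvne
  field_simp
end

section
/- Invariance of gradient descent under block-wise rescaling: let f : ℝ^{p_1} × ⋯ × ℝ^{p_L} → ℝ^k be differentiable and separately positively 1-homogeneous in each block of parameters, let loss : ℝ^k → ℝ be differentiable, and set L := loss ∘ f. Let σ = (σ_1,…,σ_L) with σ_ℓ > 0 and ∏_{ℓ=1}^{L} σ_ℓ = 1. Let θ(t) and θ̃(t), t = 0, 1, 2, …, be sequences of parameters satisfying the gradient descent recursions θ_ℓ(t+1) = θ_ℓ(t) − η_ℓ(t) ∇_ℓ L(θ(t)) and θ̃_ℓ(t+1) = θ̃_ℓ(t) − η̃_ℓ(t) ∇_ℓ L(θ̃(t)), where the learning rates satisfy η_ℓ(t) ‖∇_ℓ L(θ(t))‖₂² = η̃_ℓ(t) ‖∇_ℓ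 L(θ̃(t))‖₂² for all ℓ and t. If θ̃(0) = σ ⊙ θ(0), then θ̃(t) = σ ⊙ θ(t) for all t ≥ 0. -/
/-- **Invariance of gradient descent under block-wise rescaling.**
For `f` differentiable and separately positively 1-homogeneous in each block,
`L = loss ∘ f`, and `σ` with positive entries and `∏ σ_ℓ = 1`: if two GD
trajectories `θ, θ̃` use learning rates with
`η_ℓ(t)‖∇_ℓL(θ(t))‖² = η̃_ℓ(t)‖∇_ℓL(θ̃(t))‖²` and start at `θ̃(0) = σ ⊙ θ(0)`,
then `θ̃(t) = σ ⊙ θ(t)` for all `t`. -/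
theorem stmt11
    (L k : ℕ) (p : Fin L → ℕ)
    (f : (∀ ℓ : Fin L, EuclideanSpace ℝ (Fin (p ℓ))) → EuclideanSpace ℝ (Fin k))
    (hf : Differentiable ℝ f)
    (hhom : ∀ c : ℝ, 0 < c → ∀ (ℓ : Fin L) (w : ∀ i : Fin L, EuclideanSpace ℝ (Fin (p i))),
      f (Function.update w ℓ (c • w ℓ)) = c • f w)
    (loss : EuclideanSpace ℝ (Fin k) → ℝ) (hloss : Differentiable ℝ loss)
    (σ : Fin L → ℝ) (hσ : ∀ ℓ, 0 < σ ℓ) (hprod : ∏ ℓ, σ ℓ = 1)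
    -- blockwise gradient of `L = loss ∘ f`
    (grad : (∀ ℓ : Fin L, EuclideanSpace ℝ (Fin (p ℓ))) →
      ∀ ℓ : Fin L, EuclideanSpace ℝ (Fin (p ℓ)))
    (hgrad : ∀ x ℓ,
      grad x ℓ = gradient (fun u => loss (f (Function.update x ℓ u))) (x ℓ))
    -- the two GD trajectories and their learning rates
    (θ θt : ℕ → ∀ ℓ : Fin L, EuclideanSpace ℝ (Fin (p ℓ)))
    (η ηt : ℕ → Fin L → ℝ)
    (hθ : ∀ t ℓ, θ (t + 1) ℓ = θ t ℓ - η t ℓ • grad (θ t) ℓ)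
    (hθt : ∀ t ℓ, θt (t + 1) ℓ = θt t ℓ - ηt t ℓ • grad (θt t) ℓ)
    (hlr : ∀ t ℓ, η t ℓ * ‖grad (θ t) ℓ‖ ^ 2 = ηt t ℓ * ‖grad (θt t) ℓ‖ ^ 2)
    (h0 : θt 0 = fun ℓ => σ ℓ • θ 0 ℓ) :
    ∀ t : ℕ, θt t = fun ℓ => σ ℓ • θ t ℓ := by
  -- general multi-block scaling of `f`
  have hscale : ∀ (w : ∀ i : Fin L, EuclideanSpace ℝ (Fin (p i))),
      f (fun j => σ j • w j) = f w := by
    intro w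
    have key : ∀ s : Finset (Fin L), ∀ w : ∀ i : Fin L, EuclideanSpace ℝ (Fin (p i)),
        f (fun j => if j ∈ s then σ j • w j else w j) = (∏ j ∈ s, σ j) • f w := by
      intro s
      induction s using Finset.induction with
      | empty => intro w; simp
      | @insert a s ha ih =>
        intro w
        have heq : (fun j => if j ∈ insert a s then σ j • w j else w j)
            = Function.update (fun j => if j ∈ s then σ j • w j else w j) a
              (σ a • (fun j => if j ∈ s then σ j • w j else w j) a) := by
          funext j
          by_cases hj : j = a
          · subst hj; simp [ha]
          · rw [Function.update_of_ne hj]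
            simp [Finset.mem_insert, hj]
        rw [heq, hhom (σ a) (hσ a), ih, Finset.prod_insert ha, smul_smul]
    have := key Finset.univ w
    simp only [Finset.mem_univ, if_true] at this
    rw [this, hprod, one_smul]
  -- differentiability of the per-block restricted loss
  have hdiff : ∀ (x : ∀ i : Fin L, EuclideanSpace ℝ (Fin (p i))) (ℓ : Fin L),
      Differentiable ℝ (fun u => loss (f (Function.update x ℓ u))) := by
    intro x ℓ
    exact hloss.comp (hf.comp (fun u => (hasFDerivAt_update x u).differentiableAt))
  -- gradient rescaling
  have hgradscale : ∀ (x : ∀ i : Fin L, EuclideanSpace ℝ (Fin (p i))) (ℓ : Fin L),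
      grad (fun j => σ j • x j) ℓ = (σ ℓ)⁻¹ • grad x ℓ := by
    intro x ℓ
    set c : ℝ := (σ ℓ)⁻¹ with hc
    have hσℓ : σ ℓ ≠ 0 := (hσ ℓ).ne'
    set h : EuclideanSpace ℝ (Fin (p ℓ)) → ℝ :=
      fun u => loss (f (Function.update x ℓ u)) with hh
    set g : EuclideanSpace ℝ (Fin (p ℓ)) := grad x ℓ with hg
    -- the rescaled restricted loss
    have hfun : ∀ u, loss (f (Function.update (fun j => σ j • x j) ℓ u)) = h (c • u) := by
      intro u
      have : Function.update (fun j => σ j • x j) ℓ u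
          = fun j => σ j • (Function.update x ℓ (c • u)) j := by
        funext j
        by_cases hj : j = ℓ
        · subst hj
          simp [smul_smul, hc, mul_inv_cancel₀ hσℓ]
        · simp [Function.update_of_ne hj]
      rw [this, hscale]
    have hG : HasGradientAt h g (x ℓ) := by
      rw [hg, hgrad]; exact (hdiff x ℓ _).hasGradientAt
    have hpt : c • (σ ℓ • x ℓ) = x ℓ := by
      rw [smul_smul, inv_mul_cancel₀ hσℓ, one_smul]
    have hG2 : HasGradientAt (fun u => h (c • u)) (c • g) (σ ℓ • x ℓ) := by
      rw [hasGradientAt_iff_hasFDerivAt]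
      rw [hasGradientAt_iff_hasFDerivAt] at hG
      have h2 : HasFDerivAt (fun u : EuclideanSpace ℝ (Fin (p ℓ)) => c • u)
          (c • ContinuousLinearMap.id ℝ (EuclideanSpace ℝ (Fin (p ℓ)))) (σ ℓ • x ℓ) :=
        (hasFDerivAt_id _).const_smul c
      have h3 := (hpt ▸ hG).comp (σ ℓ • x ℓ) h2
      have h4 : (InnerProductSpace.toDual ℝ _ g).comp
            (c • ContinuousLinearMap.id ℝ (EuclideanSpace ℝ (Fin (p ℓ))))
          = InnerProductSpace.toDual ℝ _ (c • g) := by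
        ext u
        simp [real_inner_smul_left, real_inner_smul_right]
      rw [← h4]
      exact h3
    have : gradient (fun u => loss (f (Function.update (fun j => σ j • x j) ℓ u)))
        ((σ ℓ) • x ℓ) = c • g := by
      have hfe : (fun u => loss (f (Function.update (fun j => σ j • x j) ℓ u)))
          = fun u => h (c • u) := funext hfun
      rw [hfe]
      exact hG2.gradient
    rw [hgrad]
    simpa using this
  -- main induction
  intro t
  induction t with
  | zero => exact h0
  | succ t ih =>
    funext ℓ
    have hgℓ : grad (θt t) ℓ = (σ ℓ)⁻¹ • grad (θ t) ℓ := by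
      rw [ih]; exact hgradscale (θ t) ℓ
    have hσℓ : σ ℓ ≠ 0 := (hσ ℓ).ne'
    rw [hθt, hgℓ, ih, hθ, smul_sub]
    congr 1
    rw [smul_smul, smul_smul]
    by_cases hz : grad (θ t) ℓ = 0
    · rw [hz, smul_zero, smul_zero]
    · have hn : ‖grad (θ t) ℓ‖ ^ 2 ≠ 0 := pow_ne_zero 2 (norm_ne_zero_iff.mpr hz)
      have := hlr t ℓ
      rw [hgℓ, norm_smul] at this
      have habs : ‖(σ ℓ)⁻¹‖ = (σ ℓ)⁻¹ := by
        rw [Real.norm_eq_abs, abs_of_pos (inv_pos.mpr (hσ ℓ))]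
      rw [habs] at this
      field_simp at this
      have hrel : η t ℓ * σ ℓ ^ 2 = ηt t ℓ := by
        have h5 : (η t ℓ * σ ℓ ^ 2) * ‖grad (θ t) ℓ‖ ^ 2 = ηt t ℓ * ‖grad (θ t) ℓ‖ ^ 2 := by
          linear_combination ‖grad (θ t) ℓ‖ ^ 2 * this
        exact mul_right_cancel₀ hn h5
      congr 1
      rw [← hrel]
      field_simp
end

section
/- Characterization of reparameterization-invariant adaptive learning rates: fix dimensions p_1,…,p_L and for each ℓ let η_ℓ : ℝ^{p_1} × ⋯ × ℝ^{p_L} → ℝ be a function of the full gradient. For a differentiable f : ℝ^{p_1} × ⋯ × ℝ^{p_L} → ℝ, a point x, and α ∈ (0,∞)^L, define the step x'_ℓ := x_ℓ − η_ℓ(∇f(x)) ∇_ℓ f(x), and, for g(y) := f(α ⊙ y) and y := α^{-1} ⊙ x, the step y'_ℓ := y_ℓ − η_ℓ(∇g(y)) ∇_ℓ g(y). Then the following are equivalent: (i) for every differentiable f, every point x, every α ∈ (0,∞)^L and every ℓ, x'_ℓ = α_ℓ y'_ℓ; (ii) for every G = (G_1,…,G_L) ∈ ℝ^{p_1} ×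 ⋯ × ℝ^{p_L}, every α ∈ (0,∞)^L and every ℓ with G_ℓ ≠ 0, it holds α_ℓ² η_ℓ(α ⊙ G) = η_ℓ(G). In particular, (ii) says η_ℓ is positively (−2)-homogeneous in the ℓ-th gradient block and positively 0-homogeneous in the other blocks (at points where the ℓ-th block is nonzero). -/
/-- The tuple of blockwise gradients `∇h(x) = (∇_1 h(x), …, ∇_L h(x))` of a
function `h` of `L` blocks of parameters. -/
noncomputable def blockGrad {L : ℕ} {p : Fin L → ℕ}
    (h : (∀ i : Fin L, EuclideanSpace ℝ (Fin (p i))) → ℝ)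
    (x : ∀ i : Fin L, EuclideanSpace ℝ (Fin (p i))) :
    ∀ i : Fin L, EuclideanSpace ℝ (Fin (p i)) :=
  fun i => gradient (fun u => h (Function.update x i u)) (x i)

open InnerProductSpace

section helpers

variable {F : Type*} [NormedAddCommGroup F] [InnerProductSpace ℝ F] [CompleteSpace F]

lemma hasGradientAt_inner_add_const (v : F) (c : ℝ) (x : F) :
    HasGradientAt (fun u => (inner ℝ v u : ℝ) + c) v x := by
  rw [hasGradientAt_iff_hasFDerivAt]
  have h : HasFDerivAt (fun u => (inner ℝ v u : ℝ) + c) (innerSL ℝ v) x :=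
    (innerSL ℝ v).hasFDerivAt.add_const c
  exact h

lemma hasGradientAt_smul_comp {h : F → ℝ} {g : F} (c : ℝ) (u : F)
    (hg : HasGradientAt h g (c • u)) :
    HasGradientAt (fun w => h (c • w)) (c • g) u := by
  rw [hasGradientAt_iff_hasFDerivAt] at hg ⊢
  have h1 : HasFDerivAt (fun w : F => c • w) (c • ContinuousLinearMap.id ℝ F) u :=
    (hasFDerivAt_id u).const_smul c
  have h2 := hg.comp u h1
  convert h2 using 1
  · rfl
  · rfl
  · rfl
  · ext w
    simp [InnerProductSpace.toDual_apply_apply, real_inner_smul_left, real_inner_smul_right]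

end helpers

section blockGradLemmas

variable {L : ℕ} {p : Fin L → ℕ}

lemma blockGrad_linear (G x : ∀ i : Fin L, EuclideanSpace ℝ (Fin (p i))) :
    blockGrad (fun z => ∑ i, (inner ℝ (G i) (z i) : ℝ)) x = G := by
  funext ℓ
  have hfun : (fun u => ∑ i, (inner ℝ (G i) (Function.update x ℓ u i) : ℝ)) =
      fun u => (inner ℝ (G ℓ) u : ℝ) + ∑ i ∈ Finset.univ \ {ℓ}, (inner ℝ (G i) (x i) : ℝ) := by
    funext u
    have : (fun i => (inner ℝ (G i) (Function.update x ℓ u i) : ℝ)) =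
        Function.update (fun i => (inner ℝ (G i) (x i) : ℝ)) ℓ (inner ℝ (G ℓ) u : ℝ) := by
      funext i
      by_cases h : i = ℓ
      · subst h; simp
      · simp [Function.update_of_ne h]
    rw [this, Finset.sum_update_of_mem (Finset.mem_univ ℓ)]
  show gradient (fun u => ∑ i, (inner ℝ (G i) (Function.update x ℓ u i) : ℝ)) (x ℓ) = G ℓ
  rw [hfun]
  exact (hasGradientAt_inner_add_const (G ℓ) _ (x ℓ)).gradient

lemma blockGrad_scale (f : (∀ i : Fin L, EuclideanSpace ℝ (Fin (p i))) → ℝ)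
    (hf : Differentiable ℝ f) (x : ∀ i : Fin L, EuclideanSpace ℝ (Fin (p i)))
    (α : Fin L → ℝ) (hα : ∀ i, α i ≠ 0) :
    blockGrad (fun z => f fun i => α i • z i) (fun i => (α i)⁻¹ • x i) =
      fun i => α i • blockGrad f x i := by
  funext ℓ
  set y : ∀ i : Fin L, EuclideanSpace ℝ (Fin (p i)) := fun i => (α i)⁻¹ • x i with hy
  set h : EuclideanSpace ℝ (Fin (p ℓ)) → ℝ := fun v => f (Function.update x ℓ v) with hh
  have hxy : α ℓ • y ℓ = x ℓ := smul_inv_smul₀ (hα ℓ) (x ℓ)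
  have hdiff : DifferentiableAt ℝ h (x ℓ) :=
    (hf _).comp _ (hasFDerivAt_update x (x ℓ)).differentiableAt
  have hgr : HasGradientAt h (blockGrad f x ℓ) (α ℓ • y ℓ) := by
    rw [hxy]; exact hdiff.hasGradientAt
  have hcomp := hasGradientAt_smul_comp (α ℓ) (y ℓ) hgr
  have hfun : (fun u => (fun z => f fun i => α i • z i) (Function.update y ℓ u)) =
      fun u => h (α ℓ • u) := by
    funext u
    have harg : (fun i => α i • Function.update y ℓ u i) = Function.update x ℓ (α ℓ • u) := by
      funext i
      by_cases hi : i = ℓ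
      · subst hi; simp
      · simp [Function.update_of_ne hi, hy, smul_inv_smul₀ (hα i)]
    show f (fun i => α i • Function.update y ℓ u i) = f (Function.update x ℓ (α ℓ • u))
    rw [harg]
  show gradient (fun u => (fun z => f fun i => α i • z i) (Function.update y ℓ u)) (y ℓ) =
      α ℓ • blockGrad f x ℓ
  rw [hfun]
  exact hcomp.gradient

end blockGradLemmas

/-- **Characterization of reparameterization-invariant adaptive
learning rates.** The GD step with adaptive learning rates `η_ℓ(∇f(x))` commutes
with every blockwise rescaling `x = α ⊙ y`, `g = f(α ⊙ ·)` (i.e. `x'_ℓ = α_ℓ y'_ℓ`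
for all differentiable `f`, all `x`, all `α > 0` and all `ℓ`) if and only if
`α_ℓ² η_ℓ(α ⊙ G) = η_ℓ(G)` whenever `G_ℓ ≠ 0`, i.e. `η_ℓ` is positively
(−2)-homogeneous in the ℓ-th gradient block and 0-homogeneous in the others. -/
theorem stmt12
    (L : ℕ) (p : Fin L → ℕ)
    (η : ∀ _ : Fin L, (∀ i : Fin L, EuclideanSpace ℝ (Fin (p i))) → ℝ) :
    (∀ f : (∀ i : Fin L, EuclideanSpace ℝ (Fin (p i))) → ℝ, Differentiable ℝ f →
      ∀ (x : ∀ i : Fin L, EuclideanSpace ℝ (Fin (p i))) (α : Fin L → ℝ),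
        (∀ i, 0 < α i) → ∀ ℓ : Fin L,
          x ℓ - η ℓ (blockGrad f x) • blockGrad f x ℓ =
            α ℓ • ((α ℓ)⁻¹ • x ℓ -
              η ℓ (blockGrad (fun z => f fun i => α i • z i) fun i => (α i)⁻¹ • x i) •
                blockGrad (fun z => f fun i => α i • z i) (fun i => (α i)⁻¹ • x i) ℓ)) ↔
    (∀ (G : ∀ i : Fin L, EuclideanSpace ℝ (Fin (p i))) (α : Fin L → ℝ),
      (∀ i, 0 < α i) → ∀ ℓ : Fin L, G ℓ ≠ 0 →
        (α ℓ) ^ 2 * η ℓ (fun i => α i • G i) = η ℓ G) := by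
  constructor
  · intro H G α hα ℓ hG
    let f : (∀ i : Fin L, EuclideanSpace ℝ (Fin (p i))) → ℝ :=
      fun z => ∑ i, (inner ℝ (G i) (z i) : ℝ)
    have hdiff : Differentiable ℝ f := by
      apply Differentiable.fun_sum
      intro i _
      exact ((innerSL ℝ (G i)).comp
        (ContinuousLinearMap.proj (R := ℝ) (φ := fun j => EuclideanSpace ℝ (Fin (p j)))
          i)).differentiable
    have hα' : ∀ i, α i ≠ 0 := fun i => (hα i).ne'
    have key := H f hdiff G α hα ℓ
    rw [blockGrad_linear, blockGrad_scale f hdiff G α hα', blockGrad_linear] at key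
    have hx : α ℓ • (α ℓ)⁻¹ • G ℓ = G ℓ := smul_inv_smul₀ (hα' ℓ) (G ℓ)
    rw [smul_sub, hx, smul_smul, smul_smul] at key
    rw [sub_right_inj] at key
    have h2 : (η ℓ G - (α ℓ * η ℓ (fun i => α i • G i)) * α ℓ) • G ℓ = 0 := by
      rw [sub_smul, key, sub_self]
    rcases smul_eq_zero.mp h2 with h | h
    · have h3 := sub_eq_zero.mp h
      rw [h3]; ring
    · exact absurd h hG
  · intro H f hf x α hα ℓ
    have hα' : ∀ i, α i ≠ 0 := fun i => (hα i).ne'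
    rw [blockGrad_scale f hf x α hα']
    rw [smul_sub, smul_inv_smul₀ (hα' ℓ), smul_smul, smul_smul]
    by_cases hG : blockGrad f x ℓ = 0
    · rw [hG]; simp
    · rw [show (α ℓ * η ℓ (fun i => α i • blockGrad f x i)) * α ℓ =
          α ℓ ^ 2 * η ℓ (fun i => α i • blockGrad f x i) by ring,
        H (blockGrad f x) α hα ℓ hG]
end

section
/- Abstract form of the feature-learning/loss-decay/balanced-contributions criterion: let (L_n) be a sequence of integers with L_n ≥ 2, and for each n let a_{n,1},…,a_{n,L_n} ≥ 0 (the per-layer contributions η_ℓ‖∇_ℓ𝓛‖²), m_n > 0 (the feature dimension), B_n > 0 (the RMS norm of the backward vector), and c_n ∈ (0,1] (the cosine of the backward-feature angle). Define D_n := ∑_{ℓ=1}^{L_n} a_{n,ℓ} (the loss decay) and S_n := (∑_{ℓ=1}^{L_n−1} a_{n,ℓ}) / (c_n · m_n · B_n) (the feature speed given by the feature speed formula). Then the following are equivalent: (i) there exist constants 0 < c ≤ C such that for all sufficiently large n: c ≤ S_n ≤ C, c ≤ D_n ≤ C, and a_{n,ℓ} ≤ C · a_{n,ℓ'} for all ℓ,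 ℓ' ∈ {1,…,L_n}; (ii) there exist constants 0 < c ≤ C such that for all sufficiently large n: c/(m_n c_n) ≤ B_n ≤ C/(m_n c_n) and c/L_n ≤ a_{n,ℓ} ≤ C/L_n for all ℓ ∈ {1,…,L_n}. -/
private lemma div_le_div_of_nonneg_right' {a b c : ℝ} (h : a ≤ b) (hc : 0 < c) :
    a / c ≤ b / c := by
  gcongr

set_option maxHeartbeats 1000000 in

/-- **Abstract feature-learning/loss-decay/balanced-contributions
criterion.** With per-layer contributions `a n ℓ ≥ 0` (for `ℓ < L n`), feature
dimensions `m n > 0`, backward norms `B n > 0`, cosines `c n ∈ (0,1]`, loss decay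
`D n = ∑_{ℓ<L n} a n ℓ` and feature speed
`S n = (∑_{ℓ<L n − 1} a n ℓ)/(c n · m n · B n)`, the following are equivalent:
(i) `S n = Θ(1)`, `D n = Θ(1)` and the contributions are balanced;
(ii) `B n = Θ(1/(m n · c n))` and `a n ℓ = Θ(1/L n)` uniformly in `ℓ`. -/
theorem stmt13
    (L : ℕ → ℕ) (hL : ∀ n, 2 ≤ L n)
    (a : ℕ → ℕ → ℝ) (ha : ∀ n ℓ, ℓ < L n → 0 ≤ a n ℓ)
    (m B cos : ℕ → ℝ) (hm : ∀ n, 0 < m n) (hB : ∀ n, 0 < B n)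
    (hcos : ∀ n, 0 < cos n ∧ cos n ≤ 1)
    (D S : ℕ → ℝ)
    (hD : ∀ n, D n = ∑ ℓ ∈ Finset.range (L n), a n ℓ)
    (hS : ∀ n, S n = (∑ ℓ ∈ Finset.range (L n - 1), a n ℓ) / (cos n * m n * B n)) :
    (∃ c C : ℝ, 0 < c ∧ c ≤ C ∧ ∃ N : ℕ, ∀ n ≥ N,
        (c ≤ S n ∧ S n ≤ C) ∧ (c ≤ D n ∧ D n ≤ C) ∧
        ∀ ℓ < L n, ∀ ℓ' < L n, a n ℓ ≤ C * a n ℓ') ↔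
    (∃ c C : ℝ, 0 < c ∧ c ≤ C ∧ ∃ N : ℕ, ∀ n ≥ N,
        (c / (m n * cos n) ≤ B n ∧ B n ≤ C / (m n * cos n)) ∧
        ∀ ℓ < L n, c / (L n : ℝ) ≤ a n ℓ ∧ a n ℓ ≤ C / (L n : ℝ)) := by
  constructor
  · rintro ⟨c, C, hc, hcC, N, h⟩
    have hC : 0 < C := lt_of_lt_of_le hc hcC
    set C' : ℝ := max (C^2/c) (C^2) with hC'def
    have hC'pos : 0 < C' := lt_of_lt_of_le (by positivity : (0:ℝ) < C^2) (le_max_right _ _)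
    set c' : ℝ := min (min (c/(2*C^2)) (c/C)) C' with hc'def
    have hc'pos : 0 < c' := lt_min (lt_min (by positivity) (by positivity)) hC'pos
    refine ⟨c', C', hc'pos, min_le_right _ _, N, ?_⟩
    intro n hn
    obtain ⟨⟨hS1, hS2⟩, ⟨hD1, hD2⟩, hbal⟩ := h n hn
    have hLn := hL n
    have hK : (2:ℝ) ≤ (L n : ℝ) := by exact_mod_cast hLn
    have hKpos : (0:ℝ) < (L n : ℝ) := by linarith
    have hmn := hm n
    have hBn := hB n
    obtain ⟨hcos1, hcos2⟩ := hcos n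
    -- per-layer bounds
    have hup : ∀ ℓ < L n, a n ℓ ≤ C^2 / (L n : ℝ) := by
      intro ℓ hℓ
      have h1 : (L n : ℝ) * a n ℓ ≤ C * D n := by
        rw [hD]
        calc (L n : ℝ) * a n ℓ = ∑ _ℓ' ∈ Finset.range (L n), a n ℓ := by
              rw [Finset.sum_const, Finset.card_range, nsmul_eq_mul]
          _ ≤ ∑ ℓ' ∈ Finset.range (L n), C * a n ℓ' :=
              Finset.sum_le_sum fun ℓ' hℓ' => hbal ℓ hℓ ℓ' (Finset.mem_range.mp hℓ')
          _ = C * ∑ ℓ' ∈ Finset.range (L n), a n ℓ' := (Finset.mul_sum _ _ _).symm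
      rw [le_div_iff₀ hKpos]
      nlinarith
    have hlo : ∀ ℓ < L n, (c/C) / (L n : ℝ) ≤ a n ℓ := by
      intro ℓ hℓ
      have h1 : D n ≤ (L n : ℝ) * (C * a n ℓ) := by
        rw [hD]
        calc ∑ ℓ' ∈ Finset.range (L n), a n ℓ' ≤ ∑ _ℓ' ∈ Finset.range (L n), C * a n ℓ :=
              Finset.sum_le_sum fun ℓ' hℓ' => hbal ℓ' (Finset.mem_range.mp hℓ') ℓ hℓ
          _ = (L n : ℝ) * (C * a n ℓ) := by
              rw [Finset.sum_const, Finset.card_range, nsmul_eq_mul]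
      rw [div_div, div_le_iff₀ (by positivity)]
      nlinarith
    -- bounds on the truncated sum
    have hSn := hS n
    set T : ℝ := ∑ ℓ ∈ Finset.range (L n - 1), a n ℓ with hTdef
    have hmem : ∀ ℓ ∈ Finset.range (L n - 1), ℓ < L n := fun ℓ hℓ =>
      lt_of_lt_of_le (Finset.mem_range.mp hℓ) (Nat.sub_le _ _)
    have hcard : ((L n - 1 : ℕ) : ℝ) = (L n : ℝ) - 1 := by
      have : 1 ≤ L n := le_trans one_le_two hLn
      push_cast [Nat.cast_sub this]
      ring
    have hTup : T ≤ C^2 := by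
      have h1 : T ≤ ((L n - 1 : ℕ) : ℝ) * (C^2 / (L n : ℝ)) := by
        calc T ≤ ∑ _ℓ ∈ Finset.range (L n - 1), C^2 / (L n : ℝ) :=
              Finset.sum_le_sum fun ℓ hℓ => hup ℓ (hmem ℓ hℓ)
          _ = ((L n - 1 : ℕ) : ℝ) * (C^2 / (L n : ℝ)) := by
              rw [Finset.sum_const, Finset.card_range, nsmul_eq_mul]
      rw [hcard] at h1
      have h2 : ((L n : ℝ) - 1) * (C^2 / (L n : ℝ)) ≤ C^2 := by
        rw [div_eq_mul_inv]
        have : ((L n : ℝ) - 1) * (C^2 * ((L n : ℝ))⁻¹) = C^2 * (((L n : ℝ) - 1) / (L n : ℝ)) := by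
          field_simp
        rw [this]
        nlinarith [div_le_one_of_le₀ (by linarith : (L n : ℝ) - 1 ≤ (L n : ℝ)) (le_of_lt hKpos),
          div_nonneg (by linarith : (0:ℝ) ≤ (L n : ℝ) - 1) (le_of_lt hKpos)]
      linarith
    have hTlo : c/(2*C) ≤ T := by
      have h1 : ((L n - 1 : ℕ) : ℝ) * ((c/C) / (L n : ℝ)) ≤ T := by
        calc ((L n - 1 : ℕ) : ℝ) * ((c/C) / (L n : ℝ))
            = ∑ _ℓ ∈ Finset.range (L n - 1), (c/C) / (L n : ℝ) := by
              rw [Finset.sum_const, Finset.card_range, nsmul_eq_mul]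
          _ ≤ T := Finset.sum_le_sum fun ℓ hℓ => hlo ℓ (hmem ℓ hℓ)
      rw [hcard] at h1
      have h2 : c/(2*C) ≤ ((L n : ℝ) - 1) * ((c/C) / (L n : ℝ)) := by
        rw [div_le_iff₀ (by positivity : (0:ℝ) < 2*C)]
        have key : ((L n : ℝ) - 1) * ((c/C) / (L n : ℝ)) * (2*C)
            = c * (2 * ((L n : ℝ) - 1) / (L n : ℝ)) := by
          field_simp
        rw [key]
        have : (1:ℝ) ≤ 2 * ((L n : ℝ) - 1) / (L n : ℝ) := by
          rw [le_div_iff₀ hKpos]; linarith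
        nlinarith
      linarith
    -- bounds on P = cos * m * B
    set P : ℝ := cos n * m n * B n with hPdef
    have hPpos : 0 < P := by positivity
    rw [hSn] at hS1 hS2
    have hP1 : c/(2*C^2) ≤ P := by
      have hTC : T ≤ C * P := (div_le_iff₀ hPpos).mp hS2
      have hTlo' : c ≤ T * (2*C) := (div_le_iff₀ (by positivity)).mp hTlo
      rw [div_le_iff₀ (by positivity : (0:ℝ) < 2*C^2)]
      nlinarith
    have hP2 : P ≤ C^2/c := by
      have hcP : c * P ≤ T := (le_div_iff₀ hPpos).mp hS1
      rw [le_div_iff₀ hc]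
      nlinarith
    constructor
    · constructor
      · rw [div_le_iff₀ (by positivity : (0:ℝ) < m n * cos n)]
        have : c' ≤ c/(2*C^2) := le_trans (min_le_left _ _) (min_le_left _ _)
        have hPe : B n * (m n * cos n) = P := by rw [hPdef]; ring
        rw [hPe]; linarith
      · rw [le_div_iff₀ (by positivity : (0:ℝ) < m n * cos n)]
        have : C^2/c ≤ C' := le_max_left _ _
        have hPe : B n * (m n * cos n) = P := by rw [hPdef]; ring
        rw [hPe]; linarith
    · intro ℓ hℓ
      constructor
      · refine le_trans ?_ (hlo ℓ hℓ)
        have : c' ≤ c/C := le_trans (min_le_left _ _) (min_le_right _ _)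
        exact div_le_div_of_nonneg_right' this hKpos
      · refine le_trans (hup ℓ hℓ) ?_
        exact div_le_div_of_nonneg_right' (le_max_right _ _) hKpos
  · rintro ⟨c, C, hc, hcC, N, h⟩
    have hC : 0 < C := lt_of_lt_of_le hc hcC
    set C' : ℝ := max C (C/c) with hC'def
    have hC'pos : 0 < C' := lt_of_lt_of_le hC (le_max_left _ _)
    set c' : ℝ := min (min c (c/(2*C))) C' with hc'def
    have hc'pos : 0 < c' := lt_min (lt_min hc (by positivity)) hC'pos
    refine ⟨c', C', hc'pos, min_le_right _ _, N, ?_⟩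
    intro n hn
    obtain ⟨⟨hB1, hB2⟩, haB⟩ := h n hn
    have hLn := hL n
    have hK : (2:ℝ) ≤ (L n : ℝ) := by exact_mod_cast hLn
    have hKpos : (0:ℝ) < (L n : ℝ) := by linarith
    have hmn := hm n
    have hBn := hB n
    obtain ⟨hcos1, hcos2⟩ := hcos n
    have hcard : ((L n - 1 : ℕ) : ℝ) = (L n : ℝ) - 1 := by
      have : 1 ≤ L n := le_trans one_le_two hLn
      push_cast [Nat.cast_sub this]
      ring
    have hmem : ∀ ℓ ∈ Finset.range (L n - 1), ℓ < L n := fun ℓ hℓ =>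
      lt_of_lt_of_le (Finset.mem_range.mp hℓ) (Nat.sub_le _ _)
    -- D bounds
    have hDlo : c ≤ D n := by
      rw [hD]
      calc c = ((L n : ℝ)) * (c / (L n : ℝ)) := by field_simp
        _ = ∑ _ℓ ∈ Finset.range (L n), c / (L n : ℝ) := by
            rw [Finset.sum_const, Finset.card_range, nsmul_eq_mul]
        _ ≤ ∑ ℓ ∈ Finset.range (L n), a n ℓ :=
            Finset.sum_le_sum fun ℓ hℓ => (haB ℓ (Finset.mem_range.mp hℓ)).1
    have hDup : D n ≤ C := by
      rw [hD]
      calc ∑ ℓ ∈ Finset.range (L n), a n ℓ ≤ ∑ _ℓ ∈ Finset.range (L n), C / (L n : ℝ) :=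
            Finset.sum_le_sum fun ℓ hℓ => (haB ℓ (Finset.mem_range.mp hℓ)).2
        _ = ((L n : ℝ)) * (C / (L n : ℝ)) := by
            rw [Finset.sum_const, Finset.card_range, nsmul_eq_mul]
        _ = C := by field_simp
    -- T bounds
    set T : ℝ := ∑ ℓ ∈ Finset.range (L n - 1), a n ℓ with hTdef
    have hTlo : c/2 ≤ T := by
      have h1 : ((L n - 1 : ℕ) : ℝ) * (c / (L n : ℝ)) ≤ T := by
        calc ((L n - 1 : ℕ) : ℝ) * (c / (L n : ℝ))
            = ∑ _ℓ ∈ Finset.range (L n - 1), c / (L n : ℝ) := by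
              rw [Finset.sum_const, Finset.card_range, nsmul_eq_mul]
          _ ≤ T := Finset.sum_le_sum fun ℓ hℓ => (haB ℓ (hmem ℓ hℓ)).1
      rw [hcard] at h1
      have h2 : c/2 ≤ ((L n : ℝ) - 1) * (c / (L n : ℝ)) := by
        rw [div_le_iff₀ (by norm_num : (0:ℝ) < 2)]
        have key : ((L n : ℝ) - 1) * (c / (L n : ℝ)) * 2 = c * (2*((L n : ℝ) - 1) / (L n : ℝ)) := by
          field_simp
        rw [key]
        have : (1:ℝ) ≤ 2 * ((L n : ℝ) - 1) / (L n : ℝ) := by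
          rw [le_div_iff₀ hKpos]; linarith
        nlinarith
      linarith
    have hTup : T ≤ C := by
      have h1 : T ≤ ((L n - 1 : ℕ) : ℝ) * (C / (L n : ℝ)) := by
        calc T ≤ ∑ _ℓ ∈ Finset.range (L n - 1), C / (L n : ℝ) :=
              Finset.sum_le_sum fun ℓ hℓ => (haB ℓ (hmem ℓ hℓ)).2
          _ = ((L n - 1 : ℕ) : ℝ) * (C / (L n : ℝ)) := by
              rw [Finset.sum_const, Finset.card_range, nsmul_eq_mul]
      rw [hcard] at h1
      have h2 : ((L n : ℝ) - 1) * (C / (L n : ℝ)) ≤ C := by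
        rw [div_eq_mul_inv]
        have key : ((L n : ℝ) - 1) * (C * ((L n : ℝ))⁻¹) = C * (((L n : ℝ) - 1) / (L n : ℝ)) := by
          field_simp
        rw [key]
        nlinarith [div_le_one_of_le₀ (by linarith : (L n : ℝ) - 1 ≤ (L n : ℝ)) (le_of_lt hKpos),
          div_nonneg (by linarith : (0:ℝ) ≤ (L n : ℝ) - 1) (le_of_lt hKpos)]
      linarith
    -- P bounds
    set P : ℝ := cos n * m n * B n with hPdef
    have hPpos : 0 < P := by positivity
    have hPe : B n * (m n * cos n) = P := by rw [hPdef]; ring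
    have hPlo : c ≤ P := by
      have := (div_le_iff₀ (by positivity : (0:ℝ) < m n * cos n)).mp hB1
      linarith [hPe ▸ this]
    have hPup : P ≤ C := by
      have := (le_div_iff₀ (by positivity : (0:ℝ) < m n * cos n)).mp hB2
      linarith [hPe ▸ this]
    have hSlo : c/(2*C) ≤ S n := by
      rw [hS, le_div_iff₀ hPpos, div_mul_eq_mul_div, div_le_iff₀ (by positivity : (0:ℝ) < 2*C)]
      nlinarith
    have hSup : S n ≤ C/c := by
      rw [hS, div_le_iff₀ hPpos, div_mul_eq_mul_div, le_div_iff₀ hc]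
      nlinarith
    refine ⟨⟨le_trans (le_trans (min_le_left _ _) (min_le_right _ _)) hSlo,
            le_trans hSup (le_max_right _ _)⟩,
           ⟨le_trans (le_trans (min_le_left _ _) (min_le_left _ _)) hDlo,
            le_trans hDup (le_max_left _ _)⟩, ?_⟩
    intro ℓ hℓ ℓ' hℓ'
    have h1 := (haB ℓ hℓ).2
    have h2 := (haB ℓ' hℓ').1
    have : a n ℓ ≤ (C/c) * a n ℓ' := by
      calc a n ℓ ≤ C / (L n : ℝ) := h1
        _ = (C/c) * (c / (L n : ℝ)) := by field_simp
        _ ≤ (C/c) * a n ℓ' := by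
            apply mul_le_mul_of_nonneg_left h2 (by positivity)
    refine le_trans this ?_
    apply mul_le_mul_of_nonneg_right (le_max_right _ _) (ha n ℓ' hℓ')
end
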